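/- Monotonicity of the barriers in the initial datum: let j > 0, δ > 0 and let u, v ∈ L^∞(ℝ₊,ℝ₊) ∩ L¹(ℝ₊,ℝ₊) with jδ < F(0; u), jδ < F(0; v) and u ≤ v. Then for all k ∈ ℕ, S^{(δ,−)}_{kδ}(u) ≤ S^{(δ,−)}_{kδ}(v) and S^{(δ,+)}_{kδ}(u) ≤ S^{(δ,+)}_{kδ}(v). -/

import Mathlib

open MeasureTheory Set Filter

noncomputable section

/-- An element of the space `𝓤`: an atom `u.1 ≥ 0` at the origin together with a
density `u.2` on `ℝ₊`, representing the measure `u.1 δ₀ + u.2 dr`. -/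
abbrev UEl := ℝ × (ℝ → ℝ)

/-- Membership in `𝓤`: nonnegative atom, nonnegative density which is in
`L¹(ℝ₊) ∩ L^∞(ℝ₊)`. -/
def memU (u : UEl) : Prop :=
  0 ≤ u.1 ∧ (∀ r, 0 ≤ u.2 r) ∧
    Integrable u.2 (volume.restrict (Set.Ioi (0:ℝ))) ∧
    ∃ M : ℝ, ∀ r, u.2 r ≤ M

/-- The tail function `F(r; u) = c_u 𝟙_{{0}}(r) + ∫_r^∞ ρ_u`. -/
def tailF (u : UEl) (r : ℝ) : ℝ :=
  (if r = 0 then u.1 else 0) + ∫ x in Set.Ioi r, u.2 x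

/-- Total variation distance `|u − v|₁ = |c_u − c_v| + ∫₀^∞ |ρ_u − ρ_v|`. -/
def dist1 (u v : UEl) : ℝ :=
  |u.1 - v.1| + ∫ r in Set.Ioi (0:ℝ), |u.2 r - v.2 r|

/-- Membership in `𝓤_δ`: in `𝓤` and the density has mass `> jδ`. -/
def memUdelta (j δ : ℝ) (u : UEl) : Prop :=
  memU u ∧ j * δ < ∫ r in Set.Ioi (0:ℝ), u.2 r

/-- `R_δ(u) = inf {r ≥ 0 : F(r; u) = jδ}`. -/
def Rdelta (j δ : ℝ) (u : UEl) : ℝ :=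
  sInf {r : ℝ | 0 ≤ r ∧ tailF u r = j * δ}

/-- The cut-and-paste operator `K^{(δ)} u = (jδ, ρ_u 𝟙_{[0, R_δ(u)]})`. -/
def cutPaste (j δ : ℝ) (u : UEl) : UEl :=
  (j * δ, Set.indicator (Set.Icc 0 (Rdelta j δ u)) u.2)

/-- The Neumann heat kernel on `ℝ₊`. -/
def Gneum (t r r' : ℝ) : ℝ :=
  (Real.sqrt (2 * Real.pi * t))⁻¹ *
    (Real.exp (-(r - r')^2 / (2*t)) + Real.exp (-(r + r')^2 / (2*t)))

/-- The Neumann heat semigroup acting on `𝓤`: the result has zero atom and density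
`r ↦ c_u G_t(r,0) + ∫₀^∞ G_t(r,r') ρ_u(r') dr'`. -/
def heat (t : ℝ) (u : UEl) : UEl :=
  (0, fun r => u.1 * Gneum t r 0 + ∫ r' in Set.Ioi (0:ℝ), Gneum t r r' * u.2 r')

/-- Mass-transport partial order: `u ≤ v` iff `F(r;u) ≤ F(r;v)` for all `r ≥ 0`. -/
def Ule (u v : UEl) : Prop := ∀ r : ℝ, 0 ≤ r → tailF u r ≤ tailF v r

/-- Partial order modulo `m`: `F(r;u) ≤ F(r;v) + m` for all `r ≥ 0`. -/
def UleMod (u v : UEl) (m : ℝ) : Prop :=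
  ∀ r : ℝ, 0 ≤ r → tailF u r ≤ tailF v r + m

/-- The lower barrier `S^{(δ,−)}_{kδ}(u)`. -/
def Sminus (j δ : ℝ) (u : UEl) : ℕ → UEl
  | 0 => u
  | k+1 => cutPaste j δ (heat δ (Sminus j δ u k))

/-- The upper barrier `S^{(δ,+)}_{kδ}(u)`. -/
def Splus (j δ : ℝ) (u : UEl) : ℕ → UEl
  | 0 => u
  | k+1 => heat δ (cutPaste j δ (Splus j δ u k))

/-- A nonnegative density in `L¹(ℝ₊) ∩ L^∞(ℝ₊)`. -/
def goodFn (u : ℝ → ℝ) : Prop :=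
  (∀ r, 0 ≤ u r) ∧ Integrable u (volume.restrict (Set.Ioi (0:ℝ))) ∧
    ∃ M : ℝ, ∀ r, u r ≤ M

/-- Mass-transport order on densities: `∫_r^∞ u ≤ ∫_r^∞ v` for all `r ≥ 0`. -/
def fnLe (u v : ℝ → ℝ) : Prop :=
  ∀ r : ℝ, 0 ≤ r → (∫ x in Set.Ioi r, u x) ≤ ∫ x in Set.Ioi r, v x

end

/-!
Both barriers alternate the heat step `G_δ *` and the cut-and-paste step `K^{(δ)}`, so it
suffices that each step is monotone for `≤` and that the iterates stay nonnegative, integrable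
and of mass `F(0; ·) ≥ jδ`, with no atom whenever `K^{(δ)}` is applied.

By Fubini, `F(r; G_δ * u) = ∫ φ_r du` with `φ_r(s) = ∫_r^∞ G_δ(x, s) dx`. For `r ≥ 0`,
`φ_r(s) = φ_r(0) + ∫_0^s (g(r - t) - g(r + t)) dt` with a nonnegative integrand (`g` the centred
Gaussian density), and exchanging the integrals once more turns `∫ φ_r du` into
`φ_r(0) F(0; u) + ∫_0^∞ (g(r - t) - g(r + t)) F(t; u) dt`, which is monotone in `u`.

For an atomless `u` of mass at least `jδ` the tail is continuous and tends to `0`, so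
`F(R_δ(u); u) = jδ`. Hence `K^{(δ)}` preserves the mass and `F(r; K^{(δ)} u) = max(F(r; u) - jδ, 0)`
for `r > 0`, which is monotone in `u`.
-/

open ProbabilityTheory

noncomputable def gaussPDF (δ : ℝ) : ℝ → ℝ := gaussianPDFReal 0 δ.toNNReal

noncomputable def gaussTail (δ y : ℝ) : ℝ := ∫ z in Ioi y, gaussPDF δ z

section Gaussian

variable {δ : ℝ}

lemma gaussPDF_nonneg (δ z : ℝ) : 0 ≤ gaussPDF δ z := gaussianPDFReal_nonneg _ _ _

lemma integrable_gaussPDF (δ : ℝ) : Integrable (gaussPDF δ) := integrable_gaussianPDFReal _ _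

lemma continuous_gaussPDF (δ : ℝ) : Continuous (gaussPDF δ) := by
  unfold gaussPDF gaussianPDFReal; fun_prop

lemma integral_gaussPDF (hδ : 0 < δ) : ∫ z, gaussPDF δ z = 1 :=
  integral_gaussianPDFReal_eq_one 0 (Real.toNNReal_pos.2 hδ).ne'

lemma gaussPDF_neg (δ z : ℝ) : gaussPDF δ (-z) = gaussPDF δ z := by
  simp [gaussPDF, gaussianPDFReal]

lemma gaussPDF_le_of_sq_le {z w : ℝ} (h : z ^ 2 ≤ w ^ 2) : gaussPDF δ w ≤ gaussPDF δ z := by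
  simp only [gaussPDF, gaussianPDFReal, sub_zero]
  gcongr

lemma gaussPDF_add_le_sub {r t : ℝ} (hr : 0 ≤ r) (ht : 0 ≤ t) :
    gaussPDF δ (r + t) ≤ gaussPDF δ (r - t) :=
  gaussPDF_le_of_sq_le (by nlinarith)

lemma Gneum_eq_gaussPDF (hδ : 0 ≤ δ) (x s : ℝ) :
    Gneum δ x s = gaussPDF δ (x - s) + gaussPDF δ (x + s) := by
  simp [Gneum, gaussPDF, gaussianPDFReal, Real.coe_toNNReal _ hδ, mul_add]

lemma integral_Ioi_gaussPDF_sub (δ a r : ℝ) :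
    ∫ x in Ioi r, gaussPDF δ (x - a) = gaussTail δ (r - a) := by
  have hind : (Ioi r).indicator (fun x => gaussPDF δ (x - a))
      = fun x => (Ioi (r - a)).indicator (gaussPDF δ) (x - a) := by
    ext x; simp [indicator_apply]
  rw [← integral_indicator measurableSet_Ioi, hind, integral_sub_right_eq_self,
    integral_indicator measurableSet_Ioi, gaussTail]

lemma integral_Ioi_gaussPDF_add (δ a r : ℝ) :
    ∫ x in Ioi r, gaussPDF δ (x + a) = gaussTail δ (r + a) := by
  simpa using integral_Ioi_gaussPDF_sub δ (-a) r

lemma gaussTail_neg_add (hδ : 0 < δ) (y : ℝ) : gaussTail δ (-y) + gaussTail δ y = 1 := by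
  have hrefl : gaussTail δ (-y) = ∫ z in Iic y, gaussPDF δ z := by
    rw [gaussTail, ← integral_comp_neg_Iic]
    simp_rw [gaussPDF_neg]
  rw [hrefl, gaussTail, intervalIntegral.integral_Iic_add_Ioi (integrable_gaussPDF δ).integrableOn
    (integrable_gaussPDF δ).integrableOn, integral_gaussPDF hδ]

lemma gaussTail_sub_gaussTail (δ a b : ℝ) :
    gaussTail δ a - gaussTail δ b = ∫ z in a..b, gaussPDF δ z :=
  intervalIntegral.integral_Ioi_sub_Ioi' (integrable_gaussPDF δ).integrableOn
    (integrable_gaussPDF δ).integrableOn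

end Gaussian

noncomputable def neumTail (δ r s : ℝ) : ℝ := ∫ x in Ioi r, Gneum δ x s

section NeumannKernel

variable {δ : ℝ}

lemma Gneum_nonneg (δ x s : ℝ) : 0 ≤ Gneum δ x s := by
  unfold Gneum; positivity

lemma integrable_Gneum_left (hδ : 0 ≤ δ) (s : ℝ) : Integrable (fun x => Gneum δ x s) := by
  simp_rw [Gneum_eq_gaussPDF hδ]
  exact ((integrable_gaussPDF δ).comp_sub_right s).add ((integrable_gaussPDF δ).comp_add_right s)

lemma integral_Gneum_left (hδ : 0 < δ) (s : ℝ) : ∫ x, Gneum δ x s = 2 := by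
  simp_rw [Gneum_eq_gaussPDF hδ.le]
  rw [integral_add ((integrable_gaussPDF δ).comp_sub_right s)
    ((integrable_gaussPDF δ).comp_add_right s), integral_sub_right_eq_self,
    integral_add_right_eq_self, integral_gaussPDF hδ, one_add_one_eq_two]

lemma neumTail_eq_gaussTail (hδ : 0 ≤ δ) (r s : ℝ) :
    neumTail δ r s = gaussTail δ (r - s) + gaussTail δ (r + s) := by
  simp_rw [neumTail, Gneum_eq_gaussPDF hδ]
  rw [integral_add ((integrable_gaussPDF δ).comp_sub_right s).integrableOn
    ((integrable_gaussPDF δ).comp_add_right s).integrableOn, integral_Ioi_gaussPDF_sub,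
    integral_Ioi_gaussPDF_add]

lemma neumTail_zero_left (hδ : 0 < δ) (s : ℝ) : neumTail δ 0 s = 1 := by
  rw [neumTail_eq_gaussTail hδ.le, zero_sub, zero_add, gaussTail_neg_add hδ]

lemma neumTail_eq_add_integral (hδ : 0 ≤ δ) (r : ℝ) {s : ℝ} (hs : 0 ≤ s) :
    neumTail δ r s =
      neumTail δ r 0 + ∫ t in Ioc 0 s, (gaussPDF δ (r - t) - gaussPDF δ (r + t)) := by
  have hsub : IntervalIntegrable (fun t => gaussPDF δ (r - t)) volume 0 s :=
    ((continuous_gaussPDF δ).comp (continuous_sub_left r)).intervalIntegrable 0 s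
  have hadd : IntervalIntegrable (fun t => gaussPDF δ (r + t)) volume 0 s :=
    ((continuous_gaussPDF δ).comp (continuous_const_add r)).intervalIntegrable 0 s
  rw [← intervalIntegral.integral_of_le hs, intervalIntegral.integral_sub hsub hadd,
    intervalIntegral.integral_comp_sub_left (gaussPDF δ), intervalIntegral.integral_comp_add_left,
    ← gaussTail_sub_gaussTail, ← gaussTail_sub_gaussTail, neumTail_eq_gaussTail hδ,
    neumTail_eq_gaussTail hδ]
  simp only [sub_zero, add_zero]
  ring

lemma neumTail_nonneg (δ r s : ℝ) : 0 ≤ neumTail δ r s :=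
  setIntegral_nonneg measurableSet_Ioi fun x _ => Gneum_nonneg δ x s

end NeumannKernel

section LayerCake

variable {ρ ψ : ℝ → ℝ}

lemma integrable_ite_lt_mul (hψ : IntegrableOn ψ (Ioi 0)) (hρ : IntegrableOn ρ (Ioi 0)) :
    Integrable (fun p : ℝ × ℝ => if p.1 < p.2 then ψ p.1 * ρ p.2 else 0)
      ((volume.restrict (Ioi 0)).prod (volume.restrict (Ioi 0))) := by
  refine ((hψ.mul_prod hρ).indicator (measurableSet_lt measurable_fst measurable_snd)).congr
    (.of_forall fun p => ?_)
  simp [indicator_apply]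

lemma integral_ite_lt_mul_left {t : ℝ} (ht : 0 < t) :
    ∫ x in Ioi 0, (if t < x then ψ t * ρ x else 0) = ψ t * ∫ x in Ioi t, ρ x := by
  have hind : (fun x => if t < x then ψ t * ρ x else 0) = (Ioi t).indicator (ψ t * ρ ·) := by
    ext x; simp [indicator_apply]
  rw [hind, setIntegral_indicator measurableSet_Ioi, Ioi_inter_Ioi, max_eq_right ht.le,
    integral_const_mul]

lemma integral_ite_lt_mul_right (x : ℝ) :
    ∫ t in Ioi 0, (if t < x then ψ t * ρ x else 0) = ρ x * ∫ t in Ioc 0 x, ψ t := by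
  have hind : (fun t => if t < x then ψ t * ρ x else 0) = (Iio x).indicator (ψ · * ρ x) := by
    ext t; simp [indicator_apply]
  rw [hind, setIntegral_indicator measurableSet_Iio, Ioi_inter_Iio, integral_mul_const,
    integral_Ioc_eq_integral_Ioo, mul_comm]

variable (hψ : IntegrableOn ψ (Ioi 0)) (hρ : IntegrableOn ρ (Ioi 0))
include hψ hρ

lemma integrableOn_mul_integral_Ioi :
    IntegrableOn (fun t => ψ t * ∫ x in Ioi t, ρ x) (Ioi 0) := by
  refine (integrable_ite_lt_mul hψ hρ).integral_prod_left.congr ?_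
  filter_upwards [ae_restrict_mem measurableSet_Ioi] with t ht
  exact integral_ite_lt_mul_left ht

lemma integrableOn_mul_integral_Ioc :
    IntegrableOn (fun x => ρ x * ∫ t in Ioc 0 x, ψ t) (Ioi 0) :=
  (integrable_ite_lt_mul hψ hρ).integral_prod_right.congr
    (.of_forall fun x => integral_ite_lt_mul_right x)

lemma integral_mul_integral_Ioc :
    ∫ x in Ioi 0, ρ x * ∫ t in Ioc 0 x, ψ t =
      ∫ t in Ioi 0, ψ t * ∫ x in Ioi t, ρ x := by
  calc ∫ x in Ioi 0, ρ x * ∫ t in Ioc 0 x, ψ t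
      = ∫ x in Ioi 0, ∫ t in Ioi 0, (if t < x then ψ t * ρ x else 0) := by
        simp_rw [integral_ite_lt_mul_right]
    _ = ∫ t in Ioi 0, ∫ x in Ioi 0, (if t < x then ψ t * ρ x else 0) :=
        (integral_integral_swap (integrable_ite_lt_mul hψ hρ)).symm
    _ = ∫ t in Ioi 0, ψ t * ∫ x in Ioi t, ρ x :=
        setIntegral_congr_fun measurableSet_Ioi fun t ht => integral_ite_lt_mul_left ht

end LayerCake

noncomputable def pairing (φ : ℝ → ℝ) (u : UEl) : ℝ :=
  u.1 * φ 0 + ∫ x in Ioi 0, φ x * u.2 x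

lemma tailF_of_pos (u : UEl) {r : ℝ} (hr : 0 < r) : tailF u r = ∫ x in Ioi r, u.2 x := by
  simp [tailF, hr.ne']

lemma tailF_zero (u : UEl) : tailF u 0 = u.1 + ∫ x in Ioi 0, u.2 x := by
  simp [tailF]

section Pairing

variable {φ ψ : ℝ → ℝ} {u v : UEl}

lemma pairing_eq_tailF (hψ : IntegrableOn ψ (Ioi 0)) (hu : IntegrableOn u.2 (Ioi 0))
    (hφ : ∀ s > 0, φ s = φ 0 + ∫ t in Ioc 0 s, ψ t) :
    pairing φ u = φ 0 * tailF u 0 + ∫ t in Ioi 0, ψ t * tailF u t := by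
  have hsplit : ∫ x in Ioi 0, φ x * u.2 x
      = ∫ x in Ioi 0, (φ 0 * u.2 x + u.2 x * ∫ t in Ioc 0 x, ψ t) :=
    setIntegral_congr_fun measurableSet_Ioi fun x hx => by rw [hφ x hx]; ring
  have htail : ∫ t in Ioi 0, ψ t * tailF u t = ∫ t in Ioi 0, ψ t * ∫ x in Ioi t, u.2 x :=
    setIntegral_congr_fun measurableSet_Ioi fun t ht => by rw [tailF_of_pos u ht]
  rw [pairing, hsplit, integral_add (hu.const_mul _) (integrableOn_mul_integral_Ioc hψ hu),
    integral_const_mul, integral_mul_integral_Ioc hψ hu, htail, tailF_zero]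
  ring

lemma pairing_mono (hψ : IntegrableOn ψ (Ioi 0)) (hψ0 : ∀ t > 0, 0 ≤ ψ t) (hφ0 : 0 ≤ φ 0)
    (hφ : ∀ s > 0, φ s = φ 0 + ∫ t in Ioc 0 s, ψ t)
    (hu : IntegrableOn u.2 (Ioi 0)) (hv : IntegrableOn v.2 (Ioi 0)) (huv : Ule u v) :
    pairing φ u ≤ pairing φ v := by
  have hint {w : UEl} (hw : IntegrableOn w.2 (Ioi 0)) :
      IntegrableOn (fun t => ψ t * tailF w t) (Ioi 0) := by
    have := integrableOn_mul_integral_Ioi hψ hw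
    refine this.congr_fun (fun t ht => ?_) measurableSet_Ioi
    rw [tailF_of_pos w ht]
  rw [pairing_eq_tailF hψ hu hφ, pairing_eq_tailF hψ hv hφ]
  gcongr ?_ + ?_
  · exact mul_le_mul_of_nonneg_left (huv 0 le_rfl) hφ0
  · exact setIntegral_mono_on (hint hu) (hint hv) measurableSet_Ioi
      fun t ht => mul_le_mul_of_nonneg_left (huv t ht.le) (hψ0 t ht)

end Pairing

section Heat

variable {δ : ℝ} {u v : UEl}

lemma integrable_Gneum_mul (hδ : 0 < δ) {ρ : ℝ → ℝ} (hρ : IntegrableOn ρ (Ioi 0)) :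
    Integrable (fun p : ℝ × ℝ => Gneum δ p.1 p.2 * ρ p.2)
      (volume.prod (volume.restrict (Ioi 0))) := by
  have hmeas : AEStronglyMeasurable (fun p : ℝ × ℝ => Gneum δ p.1 p.2 * ρ p.2)
      (volume.prod (volume.restrict (Ioi 0))) :=
    (Continuous.aestronglyMeasurable (by unfold Gneum; fun_prop)).mul
      hρ.aestronglyMeasurable.comp_snd
  refine (integrable_prod_iff' hmeas).2
    ⟨.of_forall fun s => (integrable_Gneum_left hδ.le s).mul_const (ρ s), ?_⟩
  refine (hρ.norm.const_mul 2).congr (.of_forall fun s => ?_)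
  simp_rw [norm_mul, Real.norm_of_nonneg (Gneum_nonneg δ _ s)]
  rw [integral_mul_const, integral_Gneum_left hδ]

lemma integrable_heat_snd (hδ : 0 < δ) (hu : IntegrableOn u.2 (Ioi 0)) :
    Integrable (heat δ u).2 :=
  ((integrable_Gneum_left hδ.le 0).const_mul u.1).add
    (integrable_Gneum_mul hδ hu).integral_prod_left

lemma tailF_heat_eq_pairing (hδ : 0 < δ) (hu : IntegrableOn u.2 (Ioi 0)) (r : ℝ) :
    tailF (heat δ u) r = pairing (neumTail δ r) u := by
  have hprod : Integrable (fun p : ℝ × ℝ => Gneum δ p.1 p.2 * u.2 p.2)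
      ((volume.restrict (Ioi r)).prod (volume.restrict (Ioi 0))) := by
    rw [Measure.restrict_prod_eq_prod_univ]
    exact (integrable_Gneum_mul hδ hu).restrict
  have hswap : ∫ x in Ioi r, ∫ s in Ioi 0, Gneum δ x s * u.2 s
      = ∫ s in Ioi 0, neumTail δ r s * u.2 s := by
    rw [integral_integral_swap hprod]
    simp_rw [integral_mul_const, neumTail]
  simp only [tailF, heat, ite_self, zero_add]
  rw [integral_add ((integrable_Gneum_left hδ.le 0).const_mul u.1).integrableOn
    (integrable_Gneum_mul hδ hu).integral_prod_left.integrableOn, integral_const_mul, hswap,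
    pairing, neumTail]

lemma tailF_heat_zero (hδ : 0 < δ) (hu : IntegrableOn u.2 (Ioi 0)) :
    tailF (heat δ u) 0 = tailF u 0 := by
  simp [tailF_heat_eq_pairing hδ hu, pairing, neumTail_zero_left hδ, tailF_zero]

lemma heat_mono (hδ : 0 < δ) (hu : IntegrableOn u.2 (Ioi 0)) (hv : IntegrableOn v.2 (Ioi 0))
    (huv : Ule u v) : Ule (heat δ u) (heat δ v) := by
  intro r hr
  rw [tailF_heat_eq_pairing hδ hu, tailF_heat_eq_pairing hδ hv]
  refine pairing_mono (ψ := fun t => gaussPDF δ (r - t) - gaussPDF δ (r + t)) ?_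
    (fun t ht => sub_nonneg.2 (gaussPDF_add_le_sub hr ht.le)) (neumTail_nonneg δ r 0)
    (fun s hs => neumTail_eq_add_integral hδ.le r hs.le) hu hv huv
  exact (((integrable_gaussPDF δ).comp_sub_left r).sub
    ((integrable_gaussPDF δ).comp_add_left r)).integrableOn

end Heat

structure IsNonnegL1 (u : UEl) : Prop where
  fst_nonneg : 0 ≤ u.1
  snd_nonneg : ∀ x, 0 ≤ u.2 x
  integrableOn_snd : IntegrableOn u.2 (Ioi 0)

lemma IsNonnegL1.heat {δ : ℝ} {u : UEl} (hδ : 0 < δ) (hu : IsNonnegL1 u) :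
    IsNonnegL1 (heat δ u) where
  fst_nonneg := le_rfl
  snd_nonneg x := add_nonneg (mul_nonneg hu.fst_nonneg (Gneum_nonneg δ x 0))
    (setIntegral_nonneg measurableSet_Ioi fun s _ =>
      mul_nonneg (Gneum_nonneg δ x s) (hu.snd_nonneg s))
  integrableOn_snd := (integrable_heat_snd hδ hu.integrableOn_snd).integrableOn

lemma IsNonnegL1.cutPaste {j δ : ℝ} {u : UEl} (hjδ : 0 ≤ j * δ) (hu : IsNonnegL1 u) :
    IsNonnegL1 (cutPaste j δ u) where
  fst_nonneg := hjδ
  snd_nonneg := indicator_nonneg fun x _ => hu.snd_nonneg x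
  integrableOn_snd := hu.integrableOn_snd.indicator measurableSet_Icc

section CutPaste

variable {j δ : ℝ} {u v : UEl}

lemma tailF_of_fst_eq_zero (h1 : u.1 = 0) (r : ℝ) : tailF u r = ∫ x in Ioi r, u.2 x := by
  simp [tailF, h1]

lemma Rdelta_spec (hjδ : 0 < j * δ) (h1 : u.1 = 0) (hu : IntegrableOn u.2 (Ioi 0))
    (hm : j * δ ≤ tailF u 0) :
    0 ≤ Rdelta j δ u ∧ ∫ x in Ioi (Rdelta j δ u), u.2 x = j * δ := by
  set S := {r : ℝ | 0 ≤ r ∧ tailF u r = j * δ}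
  have hcont : ContinuousOn (fun r => ∫ x in Ioi r, u.2 x) (Ici 0) :=
    hu.continuousOn_Ici_primitive_Ioi
  have hS : S = Ici 0 ∩ (fun r => ∫ x in Ioi r, u.2 x) ⁻¹' {j * δ} := by
    ext r; simp [S, tailF_of_fst_eq_zero h1]
  have hclosed : IsClosed S :=
    hS ▸ hcont.preimage_isClosed_of_isClosed isClosed_Ici isClosed_singleton
  have hne : S.Nonempty := by
    obtain ⟨X, hX, hX0⟩ := (((tendsto_integral_Ioi_zero tendsto_id).eventually
      (gt_mem_nhds hjδ)).and (eventually_ge_atTop 0)).exists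
    obtain ⟨r, hr, hr'⟩ := intermediate_value_Icc' hX0 (hcont.mono Icc_subset_Ici_self)
      ⟨hX.le, by rwa [tailF_of_fst_eq_zero h1] at hm⟩
    exact ⟨r, hr.1, by rw [tailF_of_fst_eq_zero h1]; exact hr'⟩
  have hmem := hclosed.csInf_mem hne ⟨0, fun r hr => hr.1⟩
  exact ⟨hmem.1, by rw [← tailF_of_fst_eq_zero h1]; exact hmem.2⟩

lemma integral_Ioi_cutPaste_snd (hjδ : 0 < j * δ) (h1 : u.1 = 0) (hu0 : ∀ x, 0 ≤ u.2 x)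
    (hu : IntegrableOn u.2 (Ioi 0)) (hm : j * δ ≤ tailF u 0) {r : ℝ} (hr : 0 ≤ r) :
    ∫ x in Ioi r, (cutPaste j δ u).2 x = max ((∫ x in Ioi r, u.2 x) - j * δ) 0 := by
  obtain ⟨hR, hRtail⟩ := Rdelta_spec hjδ h1 hu hm
  set R := Rdelta j δ u
  have hcut : ∫ x in Ioi r, (cutPaste j δ u).2 x = ∫ x in Ioc r R, u.2 x := by
    have hset : Ioi r ∩ Icc 0 R = Ioc r R := by
      ext x; simp only [mem_inter_iff, mem_Ioi, mem_Icc, mem_Ioc]; constructor <;> intro h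
      · exact ⟨h.1, h.2.2⟩
      · exact ⟨h.1, ⟨hr.trans h.1.le, h.2⟩⟩
    rw [cutPaste, setIntegral_indicator measurableSet_Icc, hset]
  rcases le_or_gt r R with hrR | hRr
  · have hdiff := intervalIntegral.integral_Ioi_sub_Ioi (hu.mono_set (Ioi_subset_Ioi hr)) hrR
    rw [intervalIntegral.integral_of_le hrR, hRtail] at hdiff
    rw [hcut, ← hdiff, max_eq_left]
    exact hdiff ▸ setIntegral_nonneg measurableSet_Ioc fun x _ => hu0 x
  · rw [hcut, Ioc_eq_empty (not_lt.2 hRr.le), setIntegral_empty, max_eq_right]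
    rw [sub_nonpos, ← hRtail]
    exact setIntegral_mono_set (hu.mono_set (Ioi_subset_Ioi hR)) (.of_forall hu0)
      (.of_forall fun x hx => hRr.trans hx)

lemma tailF_cutPaste (hjδ : 0 < j * δ) (h1 : u.1 = 0) (hu : IsNonnegL1 u)
    (hm : j * δ ≤ tailF u 0) {r : ℝ} (hr : 0 ≤ r) :
    tailF (cutPaste j δ u) r = (if r = 0 then j * δ else 0) + max (tailF u r - j * δ) 0 := by
  rw [tailF, integral_Ioi_cutPaste_snd hjδ h1 hu.snd_nonneg hu.integrableOn_snd hm hr,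
    tailF_of_fst_eq_zero h1]
  rfl

lemma tailF_cutPaste_zero (hjδ : 0 < j * δ) (h1 : u.1 = 0) (hu : IsNonnegL1 u)
    (hm : j * δ ≤ tailF u 0) : tailF (cutPaste j δ u) 0 = tailF u 0 := by
  rw [tailF_cutPaste hjδ h1 hu hm le_rfl, if_pos rfl, max_eq_left (sub_nonneg.2 hm)]
  ring

lemma cutPaste_mono (hjδ : 0 < j * δ) (h1u : u.1 = 0) (h1v : v.1 = 0) (hu : IsNonnegL1 u)
    (hv : IsNonnegL1 v) (hm : j * δ ≤ tailF u 0) (huv : Ule u v) :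
    Ule (cutPaste j δ u) (cutPaste j δ v) := by
  intro r hr
  rw [tailF_cutPaste hjδ h1u hu hm hr,
    tailF_cutPaste hjδ h1v hv (hm.trans (huv 0 le_rfl)) hr]
  gcongr
  exact huv r hr

end CutPaste

section Barriers

variable {j δ : ℝ} {u v : UEl}

lemma Sminus_isNonnegL1_tailF_zero (hjδ : 0 < j * δ) (hδ : 0 < δ) (hu : IsNonnegL1 u)
    (hm : j * δ ≤ tailF u 0) (k : ℕ) :
    IsNonnegL1 (Sminus j δ u k) ∧ tailF (Sminus j δ u k) 0 = tailF u 0 := by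
  induction k with
  | zero => exact ⟨hu, rfl⟩
  | succ k ih =>
    obtain ⟨hk, hmk⟩ := ih
    have hH := hk.heat hδ
    have hmH : tailF (heat δ (Sminus j δ u k)) 0 = tailF u 0 :=
      (tailF_heat_zero hδ hk.integrableOn_snd).trans hmk
    exact ⟨hH.cutPaste hjδ.le, (tailF_cutPaste_zero hjδ rfl hH (hmH ▸ hm)).trans hmH⟩

lemma Splus_isNonnegL1_fst_tailF_zero (hjδ : 0 < j * δ) (hδ : 0 < δ) (h1 : u.1 = 0)
    (hu : IsNonnegL1 u) (hm : j * δ ≤ tailF u 0) (k : ℕ) :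
    IsNonnegL1 (Splus j δ u k) ∧ (Splus j δ u k).1 = 0 ∧
      tailF (Splus j δ u k) 0 = tailF u 0 := by
  induction k with
  | zero => exact ⟨hu, h1, rfl⟩
  | succ k ih =>
    obtain ⟨hk, h1k, hmk⟩ := ih
    have hK := hk.cutPaste hjδ.le
    exact ⟨hK.heat hδ, rfl, (tailF_heat_zero hδ hK.integrableOn_snd).trans
      ((tailF_cutPaste_zero hjδ h1k hk (hmk ▸ hm)).trans hmk)⟩

lemma Sminus_mono (hjδ : 0 < j * δ) (hδ : 0 < δ) (hu : IsNonnegL1 u) (hv : IsNonnegL1 v)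
    (hm : j * δ ≤ tailF u 0) (huv : Ule u v) (k : ℕ) :
    Ule (Sminus j δ u k) (Sminus j δ v k) := by
  induction k with
  | zero => exact huv
  | succ k ih =>
    have hmv : j * δ ≤ tailF v 0 := hm.trans (huv 0 le_rfl)
    obtain ⟨hku, hmku⟩ := Sminus_isNonnegL1_tailF_zero hjδ hδ hu hm k
    obtain ⟨hkv, -⟩ := Sminus_isNonnegL1_tailF_zero hjδ hδ hv hmv k
    exact cutPaste_mono hjδ rfl rfl (hku.heat hδ) (hkv.heat hδ)
      ((tailF_heat_zero hδ hku.integrableOn_snd).trans hmku ▸ hm)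
      (heat_mono hδ hku.integrableOn_snd hkv.integrableOn_snd ih)

lemma Splus_mono (hjδ : 0 < j * δ) (hδ : 0 < δ) (h1u : u.1 = 0) (h1v : v.1 = 0)
    (hu : IsNonnegL1 u) (hv : IsNonnegL1 v) (hm : j * δ ≤ tailF u 0) (huv : Ule u v) (k : ℕ) :
    Ule (Splus j δ u k) (Splus j δ v k) := by
  induction k with
  | zero => exact huv
  | succ k ih =>
    have hmv : j * δ ≤ tailF v 0 := hm.trans (huv 0 le_rfl)
    obtain ⟨hku, h1ku, hmku⟩ := Splus_isNonnegL1_fst_tailF_zero hjδ hδ h1u hu hm k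
    obtain ⟨hkv, h1kv, -⟩ := Splus_isNonnegL1_fst_tailF_zero hjδ hδ h1v hv hmv k
    exact heat_mono hδ (hku.cutPaste hjδ.le).integrableOn_snd
      (hkv.cutPaste hjδ.le).integrableOn_snd
      (cutPaste_mono hjδ h1ku h1kv hku hkv (hmku ▸ hm) ih)

end Barriers

theorem barriers_monotone_general (j δ : ℝ) (hj : 0 < j) (hδ : 0 < δ)
    (u v : ℝ → ℝ) (hu : goodFn u) (hv : goodFn v)
    (hju : j * δ < ∫ x in Set.Ioi (0:ℝ), u x)
    (hle : Ule ((0:ℝ), u) ((0:ℝ), v)) :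
    ∀ k : ℕ,
      Ule (Sminus j δ ((0:ℝ), u) k) (Sminus j δ ((0:ℝ), v) k) ∧
      Ule (Splus j δ ((0:ℝ), u) k) (Splus j δ ((0:ℝ), v) k) := by
  have hjδ : 0 < j * δ := mul_pos hj hδ
  have hu' : IsNonnegL1 ((0:ℝ), u) := ⟨le_rfl, hu.1, hu.2.1⟩
  have hv' : IsNonnegL1 ((0:ℝ), v) := ⟨le_rfl, hv.1, hv.2.1⟩
  have hm : j * δ ≤ tailF ((0:ℝ), u) 0 := by simpa [tailF_zero] using hju.le
  exact fun k => ⟨Sminus_mono hjδ hδ hu' hv' hm hle k,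
    Splus_mono hjδ hδ rfl rfl hu' hv' hm hle k⟩

/-- monotonicity of the barriers in the initial datum. -/
theorem barriers_monotone (j δ : ℝ) (hj : 0 < j) (hδ : 0 < δ)
    (u v : ℝ → ℝ) (hu : goodFn u) (hv : goodFn v)
    (hju : j * δ < ∫ x in Set.Ioi (0:ℝ), u x)
    (hjv : j * δ < ∫ x in Set.Ioi (0:ℝ), v x)
    (hle : Ule ((0:ℝ), u) ((0:ℝ), v)) :
    ∀ k : ℕ,
      Ule (Sminus j δ ((0:ℝ), u) k) (Sminus j δ ((0:ℝ), v) k) ∧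
      Ule (Splus j δ ((0:ℝ), u) k) (Splus j δ ((0:ℝ), v) k) :=
  barriers_monotone_general j δ hj hδ u v hu hv hju hle
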